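/- Let t ≥ 0 and let G be a simple graph containing no t+2 pairwise vertex-disjoint triangles. Let M be a family of t+1 pairwise vertex-disjoint triangles in G, let D be the induced subgraph of G on the vertices not covered by M, and let 𝓜 be a matching in D. Suppose (x₁,y₁,z₁) and (x₂,y₂,z₂) are two distinct triangles of M such that each of z₁ and z₂ is friendly in G with at least two distinct edges of 𝓜. Then neither x₁ nor y₁ is adjacent in G to both x₂ and y₂. -/

import Mathlib

/-- `G` contains `k` pairwise vertex-disjoint triangles. -/
def HasIndepTriangles {V : Type*} (G : SimpleGraph V) (k : ℕ) : Prop :=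
  ∃ f : Fin k → Fin 3 → V,
    Function.Injective (fun p : Fin k × Fin 3 => f p.1 p.2) ∧
    ∀ i, G.Adj (f i 0) (f i 1) ∧ G.Adj (f i 1) (f i 2) ∧ G.Adj (f i 0) (f i 2)

/-- The vertex `w` is friendly with the edge `e`: it is adjacent to both endpoints. -/
def Friendly {V : Type*} (G : SimpleGraph V) (w : V) (e : Sym2 V) : Prop :=
  ∀ x ∈ e, G.Adj w x

/-- `F` is a matching of the subgraph of `G` induced on `S`. -/
def IsMatchingOn {V : Type*} (G : SimpleGraph V) (S : Set V) (F : Finset (Sym2 V)) : Prop :=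
  (∀ e ∈ F, e ∈ G.edgeSet ∧ ∀ x ∈ e, x ∈ S) ∧
  ((F : Set (Sym2 V)).Pairwise fun e f => ∀ v, v ∈ e → v ∉ f)

/-!
Since `z₁` and `z₂` are each friendly with two edges of the matching, they are friendly with two
distinct, hence disjoint, matching edges `ab` and `cd`, which lie outside the triangles of `M`.
Replacing the triangle `x₁y₁z₁` by `z₁ab` and `x₂y₂z₂` by `z₂cd` frees `x₁, y₁, x₂, y₂`; if `x₁`
(or `y₁`) were adjacent to both `x₂` and `y₂`, these would span one more disjoint triangle,
giving `t + 2` disjoint triangles.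
-/

open Function

theorem exists_ne_of_exists_pair {α : Type*} {s : Finset α} {P Q : α → Prop}
    (hP : ∃ a₁ ∈ s, ∃ a₂ ∈ s, a₁ ≠ a₂ ∧ P a₁ ∧ P a₂) (hQ : ∃ b ∈ s, Q b) :
    ∃ a ∈ s, ∃ b ∈ s, a ≠ b ∧ P a ∧ Q b := by
  obtain ⟨a₁, ha₁, a₂, ha₂, ha, hPa₁, hPa₂⟩ := hP
  obtain ⟨b, hb, hQb⟩ := hQ
  rcases eq_or_ne a₁ b with rfl | hne
  · exact ⟨a₂, ha₂, a₁, ha₁, ha.symm, hPa₂, hQb⟩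
  · exact ⟨a₁, ha₁, b, hb, hne, hPa₁, hQb⟩

section
variable {V ι κ : Type*}

theorem injective_uncurry_iff {f : ι → κ → V} :
    Injective (uncurry f) ↔ (∀ i, Injective (f i)) ∧ ∀ i j, i ≠ j → ∀ a b, f i a ≠ f j b := by
  refine ⟨fun h => ⟨fun i a b hab => (Prod.ext_iff.mp (@h (i, a) (i, b) hab)).2,
    fun i j hij a b hab => hij (Prod.ext_iff.mp (@h (i, a) (j, b) hab)).1⟩, ?_⟩
  rintro ⟨hinj, hdisj⟩ ⟨i, a⟩ ⟨j, b⟩ hab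
  obtain rfl : i = j := by_contra fun hij => hdisj i j hij a b hab
  exact congrArg _ (hinj i hab)

variable (G : SimpleGraph V)

def IsTriangle (T : Fin 3 → V) : Prop :=
  G.Adj (T 0) (T 1) ∧ G.Adj (T 1) (T 2) ∧ G.Adj (T 0) (T 2)

def IsTrianglePacking (f : ι → Fin 3 → V) : Prop :=
  Injective (uncurry f) ∧ ∀ i, IsTriangle G (f i)

variable {G}

theorem IsTriangle.adj {T : Fin 3 → V} (hT : IsTriangle G T) {a b : Fin 3} (hab : a ≠ b) :
    G.Adj (T a) (T b) := by
  obtain ⟨h01, h12, h02⟩ := hT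
  fin_cases a <;> fin_cases b <;> first | exact absurd rfl hab | assumption | exact .symm ‹_›

theorem IsTriangle.injective {T : Fin 3 → V} (hT : IsTriangle G T) : Injective T :=
  fun _ _ h => Classical.byContradiction fun hab => (hT.adj hab).ne h

theorem isTriangle_of_friendly {z a b : V} (hz : Friendly G z s(a, b)) (hab : G.Adj a b) :
    IsTriangle G ![z, a, b] :=
  ⟨hz a (Sym2.mem_mk_left a b), hab, hz b (Sym2.mem_mk_right a b)⟩

theorem isTrianglePacking_iff {f : ι → Fin 3 → V} :
    IsTrianglePacking G f ↔ (∀ i, IsTriangle G (f i)) ∧ ∀ i j, i ≠ j → ∀ a b, f i a ≠ f j b := by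
  rw [IsTrianglePacking, injective_uncurry_iff]
  exact ⟨fun ⟨⟨_, hd⟩, ht⟩ => ⟨ht, hd⟩, fun ⟨ht, hd⟩ => ⟨⟨fun i => (ht i).injective, hd⟩, ht⟩⟩

namespace IsTrianglePacking

variable {f : ι → Fin 3 → V}

theorem ne_of_ne_left (hf : IsTrianglePacking G f) {i j : ι} (hij : i ≠ j) (a b : Fin 3) :
    f i a ≠ f j b :=
  (isTrianglePacking_iff.mp hf).2 i j hij a b

theorem ne_of_ne_right (hf : IsTrianglePacking G f) (i : ι) {a b : Fin 3} (hab : a ≠ b) :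
    f i a ≠ f i b :=
  (hf.2 i).injective.ne hab

theorem update [DecidableEq ι] (hf : IsTrianglePacking G f) {i : ι} {T : Fin 3 → V}
    (hT : IsTriangle G T) (hfresh : ∀ j ≠ i, ∀ a b, f j a ≠ T b) :
    IsTrianglePacking G (Function.update f i T) := by
  refine isTrianglePacking_iff.mpr ⟨fun j => ?_, fun j k hjk a b => ?_⟩
  · rcases eq_or_ne j i with rfl | hj
    · simpa using hT
    · simpa [hj] using hf.2 j
  · rcases eq_or_ne j i with hj | hj <;> rcases eq_or_ne k i with hk | hk
    · exact absurd (hj.trans hk.symm) hjk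
    · rw [hj, update_self, update_of_ne hk]
      exact (hfresh k hk b a).symm
    · rw [hk, update_self, update_of_ne hj]
      exact hfresh j hj a b
    · simpa only [update_of_ne hj, update_of_ne hk] using hf.ne_of_ne_left hjk a b

theorem optionElim (hf : IsTrianglePacking G f) {T : Fin 3 → V} (hT : IsTriangle G T)
    (hfresh : ∀ j a b, f j a ≠ T b) : IsTrianglePacking G (fun o : Option ι => o.elim T f) := by
  refine isTrianglePacking_iff.mpr ⟨fun o => ?_, ?_⟩
  · cases o with
    | none => exact hT
    | some j => exact hf.2 j
  · rintro (_ | j) (_ | k) hjk a b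
    · exact absurd rfl hjk
    · exact (hfresh k b a).symm
    · exact hfresh j a b
    · exact hf.ne_of_ne_left (fun h => hjk (congrArg some h)) a b

theorem hasIndepTriangles [Fintype ι] (hf : IsTrianglePacking G f) :
    HasIndepTriangles G (Fintype.card ι) :=
  ⟨fun k => f ((Fintype.equivFin ι).symm k),
    hf.1.comp ((Fintype.equivFin ι).symm.injective.prodMap injective_id), fun _ => hf.2 _⟩

/-- Triangle `i₁` is traded for `f i₁ p₁` with the edge `ab`, triangle `i₂` for `f i₂ p₂` with
the edge `cd`, and the freed vertices `f i₁ q₁`, `f i₂ r₂`, `f i₂ s₂` form one more triangle. -/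
theorem augment [DecidableEq ι] (hf : IsTrianglePacking G f) {i₁ i₂ : ι} (hne : i₁ ≠ i₂)
    {p₁ q₁ p₂ r₂ s₂ : Fin 3} (hq₁ : q₁ ≠ p₁) (hr₂ : r₂ ≠ p₂) (hs₂ : s₂ ≠ p₂) (hrs₂ : r₂ ≠ s₂)
    {a b c d : V} (hab : G.Adj a b) (hcd : G.Adj c d) (hfa : ∀ i j, f i j ≠ a)
    (hfb : ∀ i j, f i j ≠ b) (hfc : ∀ i j, f i j ≠ c) (hfd : ∀ i j, f i j ≠ d)
    (hac : a ≠ c) (had : a ≠ d) (hbc : b ≠ c) (hbd : b ≠ d)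
    (hz₁ : Friendly G (f i₁ p₁) s(a, b)) (hz₂ : Friendly G (f i₂ p₂) s(c, d))
    (hw₁ : G.Adj (f i₁ q₁) (f i₂ r₂)) (hw₂ : G.Adj (f i₁ q₁) (f i₂ s₂)) :
    IsTrianglePacking G fun o : Option ι => o.elim ![f i₁ q₁, f i₂ r₂, f i₂ s₂]
      (Function.update (Function.update f i₁ ![f i₁ p₁, a, b]) i₂ ![f i₂ p₂, c, d]) := by
  refine ((hf.update (isTriangle_of_friendly hz₁ hab) ?_).update
    (isTriangle_of_friendly hz₂ hcd) ?_).optionElim ⟨hw₁, (hf.2 i₂).adj hrs₂, hw₂⟩ ?_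
  · intro j hj m n
    fin_cases n
    exacts [hf.ne_of_ne_left hj m p₁, hfa j m, hfb j m]
  · intro j hj m n
    rcases eq_or_ne j i₁ with rfl | hj₁
    · rw [update_self]
      fin_cases m <;> fin_cases n
      exacts [hf.ne_of_ne_left hj p₁ p₂, hfc _ _, hfd _ _, (hfa _ _).symm, hac, had,
        (hfb _ _).symm, hbc, hbd]
    · rw [update_of_ne hj₁]
      fin_cases n
      exacts [hf.ne_of_ne_left hj m p₂, hfc j m, hfd j m]
  · intro j m n
    rcases eq_or_ne j i₂ with rfl | hj₂
    · rw [update_self]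
      fin_cases m <;> fin_cases n
      exacts [hf.ne_of_ne_left hne.symm p₂ q₁, hf.ne_of_ne_right j hr₂.symm,
        hf.ne_of_ne_right j hs₂.symm, (hfc _ _).symm, (hfc _ _).symm, (hfc _ _).symm,
        (hfd _ _).symm, (hfd _ _).symm, (hfd _ _).symm]
    rw [update_of_ne hj₂]
    rcases eq_or_ne j i₁ with rfl | hj₁
    · rw [update_self]
      fin_cases m <;> fin_cases n
      exacts [hf.ne_of_ne_right j hq₁.symm, hf.ne_of_ne_left hne p₁ r₂,
        hf.ne_of_ne_left hne p₁ s₂, (hfa _ _).symm, (hfa _ _).symm, (hfa _ _).symm,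
        (hfb _ _).symm, (hfb _ _).symm, (hfb _ _).symm]
    · rw [update_of_ne hj₁]
      fin_cases n
      exacts [hf.ne_of_ne_left hj₁ m q₁, hf.ne_of_ne_left hj₂ m r₂, hf.ne_of_ne_left hj₂ m s₂]

theorem hasIndepTriangles_succ_of_matching [DecidableEq ι] [Fintype ι]
    (hf : IsTrianglePacking G f) {F : Finset (Sym2 V)}
    (hF : IsMatchingOn G {x | ∀ i j, f i j ≠ x} F) {i₁ i₂ : ι} (hne : i₁ ≠ i₂)
    {p₁ q₁ p₂ r₂ s₂ : Fin 3} (hq₁ : q₁ ≠ p₁) (hr₂ : r₂ ≠ p₂) (hs₂ : s₂ ≠ p₂) (hrs₂ : r₂ ≠ s₂)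
    {e₁ e₂ : Sym2 V} (he₁ : e₁ ∈ F) (he₂ : e₂ ∈ F) (he : e₁ ≠ e₂)
    (hz₁ : Friendly G (f i₁ p₁) e₁) (hz₂ : Friendly G (f i₂ p₂) e₂)
    (hw₁ : G.Adj (f i₁ q₁) (f i₂ r₂)) (hw₂ : G.Adj (f i₁ q₁) (f i₂ s₂)) :
    HasIndepTriangles G (Fintype.card ι + 1) := by
  induction e₁ using Sym2.ind with | _ a b => ?_
  induction e₂ using Sym2.ind with | _ c d => ?_
  obtain ⟨⟨hab, hfa, hfb⟩, ⟨hcd, hfc, hfd⟩⟩ :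
      (G.Adj a b ∧ (∀ i j, f i j ≠ a) ∧ ∀ i j, f i j ≠ b) ∧
        G.Adj c d ∧ (∀ i j, f i j ≠ c) ∧ ∀ i j, f i j ≠ d := by
    simpa [SimpleGraph.mem_edgeSet] using And.intro (hF.1 _ he₁) (hF.1 _ he₂)
  have hdisj := hF.2 he₁ he₂ he
  simp only [Sym2.mem_iff, forall_eq_or_imp, forall_eq, not_or] at hdisj
  obtain ⟨⟨hac, had⟩, hbc, hbd⟩ := hdisj
  rw [← Fintype.card_option]
  exact (hf.augment hne hq₁ hr₂ hs₂ hrs₂ hab hcd hfa hfb hfc hfd hac had hbc hbd hz₁ hz₂ hw₁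
    hw₂).hasIndepTriangles

end IsTrianglePacking
end

theorem no_adjacency_between_A_triangles_general {V : Type*} (t : ℕ)
    (G : SimpleGraph V) (hG : ¬ HasIndepTriangles G (t + 2))
    (f : Fin (t + 1) → Fin 3 → V)
    (hinj : Function.Injective fun p : Fin (t + 1) × Fin 3 => f p.1 p.2)
    (htri : ∀ i, G.Adj (f i 0) (f i 1) ∧ G.Adj (f i 1) (f i 2) ∧ G.Adj (f i 0) (f i 2))
    (Dset : Set V) (hDset : Dset = {x | ∀ i j, f i j ≠ x})
    (F : Finset (Sym2 V)) (hF : IsMatchingOn G Dset F)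
    (x₁ y₁ z₁ x₂ y₂ z₂ : V) (i₁ i₂ : Fin (t + 1)) (hne : i₁ ≠ i₂)
    (σ₁ σ₂ : Equiv.Perm (Fin 3))
    (hx₁ : x₁ = f i₁ (σ₁ 0)) (hy₁ : y₁ = f i₁ (σ₁ 1)) (hz₁ : z₁ = f i₁ (σ₁ 2))
    (hx₂ : x₂ = f i₂ (σ₂ 0)) (hy₂ : y₂ = f i₂ (σ₂ 1)) (hz₂ : z₂ = f i₂ (σ₂ 2))
    (hfr₁ : ∃ e₁ ∈ F, ∃ e₂ ∈ F, e₁ ≠ e₂ ∧ Friendly G z₁ e₁ ∧ Friendly G z₁ e₂)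
    (hfr₂ : ∃ e₁ ∈ F, ∃ e₂ ∈ F, e₁ ≠ e₂ ∧ Friendly G z₂ e₁ ∧ Friendly G z₂ e₂) :
    ¬ (G.Adj x₁ x₂ ∧ G.Adj x₁ y₂) ∧ ¬ (G.Adj y₁ x₂ ∧ G.Adj y₁ y₂) := by
  subst hDset hx₁ hy₁ hz₁ hx₂ hy₂ hz₂
  have hf : IsTrianglePacking G f := ⟨hinj, htri⟩
  obtain ⟨e₁, he₁, e₂, he₂, he, hze₁, hze₂⟩ :=
    exists_ne_of_exists_pair hfr₁ (hfr₂.imp fun _ ⟨he, _, _, _, hze, _⟩ => ⟨he, hze⟩)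
  have hnot (j : Fin 3) (hj : j ≠ 2) :
      ¬ (G.Adj (f i₁ (σ₁ j)) (f i₂ (σ₂ 0)) ∧ G.Adj (f i₁ (σ₁ j)) (f i₂ (σ₂ 1))) :=
    fun ⟨hw₁, hw₂⟩ => hG <| by
      simpa using hf.hasIndepTriangles_succ_of_matching hF hne (σ₁.injective.ne hj)
        (σ₂.injective.ne (by decide)) (σ₂.injective.ne (by decide)) (σ₂.injective.ne (by decide))
        he₁ he₂ he hze₁ hze₂ hw₁ hw₂
  exact ⟨hnot 0 (by decide), hnot 1 (by decide)⟩

/-- If `(x₁,y₁,z₁)` and `(x₂,y₂,z₂)` are distinct triangles of `M` whose vertices `z₁`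
and `z₂` are each friendly with at least two distinct edges of the matching `F` in `D`,
then neither `x₁` nor `y₁` is adjacent to both `x₂` and `y₂`. -/
theorem no_adjacency_between_A_triangles {V : Type*} [Fintype V] [DecidableEq V] (t : ℕ)
    (G : SimpleGraph V) (hG : ¬ HasIndepTriangles G (t + 2))
    (f : Fin (t + 1) → Fin 3 → V)
    (hinj : Function.Injective fun p : Fin (t + 1) × Fin 3 => f p.1 p.2)
    (htri : ∀ i, G.Adj (f i 0) (f i 1) ∧ G.Adj (f i 1) (f i 2) ∧ G.Adj (f i 0) (f i 2))
    (Dset : Set V) (hDset : Dset = {x | ∀ i j, f i j ≠ x})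
    (F : Finset (Sym2 V)) (hF : IsMatchingOn G Dset F)
    (x₁ y₁ z₁ x₂ y₂ z₂ : V) (i₁ i₂ : Fin (t + 1)) (hne : i₁ ≠ i₂)
    (σ₁ σ₂ : Equiv.Perm (Fin 3))
    (hx₁ : x₁ = f i₁ (σ₁ 0)) (hy₁ : y₁ = f i₁ (σ₁ 1)) (hz₁ : z₁ = f i₁ (σ₁ 2))
    (hx₂ : x₂ = f i₂ (σ₂ 0)) (hy₂ : y₂ = f i₂ (σ₂ 1)) (hz₂ : z₂ = f i₂ (σ₂ 2))
    (hfr₁ : ∃ e₁ ∈ F, ∃ e₂ ∈ F, e₁ ≠ e₂ ∧ Friendly G z₁ e₁ ∧ Friendly G z₁ e₂)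
    (hfr₂ : ∃ e₁ ∈ F, ∃ e₂ ∈ F, e₁ ≠ e₂ ∧ Friendly G z₂ e₁ ∧ Friendly G z₂ e₂) :
    ¬ (G.Adj x₁ x₂ ∧ G.Adj x₁ y₂) ∧ ¬ (G.Adj y₁ x₂ ∧ G.Adj y₁ y₂) :=
  no_adjacency_between_A_triangles_general t G hG f hinj htri Dset hDset F hF x₁ y₁ z₁ x₂ y₂ z₂ i₁
    i₂ hne σ₁ σ₂ hx₁ hy₁ hz₁ hx₂ hy₂ hz₂ hfr₁ hfr₂
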